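/- arXiv:2401.03671 — 5 statements merged into one kernel-verified Lean document; each statement's English description precedes it below -/
import Mathlib

section
/- Let Ω be a finite set, p : Ω → ℝ≥0 a probability mass function, and u_s, u_r : Ω × {0,1} → ℝ. For a binary filter described by x : Ω → [0,1] (x(ω) is the probability of signal 0 in state ω), define the sender-IC conditions: ∑_ω p(ω)(u_s(ω,0)−u_s(ω,1))·x(ω) ≥ 0 and ∑_ω p(ω)(u_s(ω,0)−u_s(ω,1))·(1−x(ω)) ≤ 0; define receiver-IC analogously with u_r. If x satisfies sender-IC and receiver-IC, and ω₀ ∈ Ω satisfies u_s(ω₀,0) ≥ u_s(ω₀,1) and u_r(ω₀,0) ≥ u_r(ω₀,1), then the modified filter x' with x'(ω₀) = 1 and x' = x elsewhere still satisfies sender-IC and receiver-IC, and the receiver's expected utility ∑_ω p(ω)(x'(ω)·u_r(ω,0) + (1−x'(ω))·u_r(ω,1)) is at least that under x. -/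
open Finset

/-- Setting the filter probability of signal 0 to 1 at a state where both the
sender and the receiver weakly prefer action 0 preserves sender-IC and
receiver-IC and weakly increases the receiver's expected utility. -/
theorem stmt_1 {Ω : Type*} [Fintype Ω] [DecidableEq Ω]
    (p : Ω → ℝ) (hp : ∀ ω, 0 ≤ p ω) (hsum : ∑ ω, p ω = 1)
    (us ur : Ω → Fin 2 → ℝ)
    (x : Ω → ℝ) (hx : ∀ ω, x ω ∈ Set.Icc (0 : ℝ) 1)
    (hsIC0 : 0 ≤ ∑ ω, p ω * (us ω 0 - us ω 1) * x ω)
    (hsIC1 : ∑ ω, p ω * (us ω 0 - us ω 1) * (1 - x ω) ≤ 0)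
    (hrIC0 : 0 ≤ ∑ ω, p ω * (ur ω 0 - ur ω 1) * x ω)
    (hrIC1 : ∑ ω, p ω * (ur ω 0 - ur ω 1) * (1 - x ω) ≤ 0)
    (ω₀ : Ω) (hs0 : us ω₀ 1 ≤ us ω₀ 0) (hr0 : ur ω₀ 1 ≤ ur ω₀ 0) :
    letI x' := Function.update x ω₀ 1
    (0 ≤ ∑ ω, p ω * (us ω 0 - us ω 1) * x' ω) ∧
    (∑ ω, p ω * (us ω 0 - us ω 1) * (1 - x' ω) ≤ 0) ∧
    (0 ≤ ∑ ω, p ω * (ur ω 0 - ur ω 1) * x' ω) ∧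
    (∑ ω, p ω * (ur ω 0 - ur ω 1) * (1 - x' ω) ≤ 0) ∧
    ∑ ω, p ω * (x ω * ur ω 0 + (1 - x ω) * ur ω 1) ≤
      ∑ ω, p ω * (x' ω * ur ω 0 + (1 - x' ω) * ur ω 1) := by
  set x' := Function.update x ω₀ 1 with hx'def
  have key : ∀ G : Ω → ℝ → ℝ,
      ∑ ω, G ω (x' ω) = (∑ ω, G ω (x ω)) - G ω₀ (x ω₀) + G ω₀ 1 := by
    intro G
    have h1 : (fun ω => G ω (x' ω)) =
        Function.update (fun ω => G ω (x ω)) ω₀ (G ω₀ 1) := by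
      funext ω
      by_cases h : ω = ω₀
      · subst h; simp [x', Function.update_self]
      · simp [x', Function.update_of_ne h]
    calc ∑ ω, G ω (x' ω)
        = ∑ ω, Function.update (fun ω => G ω (x ω)) ω₀ (G ω₀ 1) ω := by
          rw [h1]
      _ = G ω₀ 1 + ∑ ω ∈ univ \ {ω₀}, G ω (x ω) := by
          rw [Finset.sum_update_of_mem (mem_univ ω₀)]
      _ = (∑ ω, G ω (x ω)) - G ω₀ (x ω₀) + G ω₀ 1 := by
          rw [Finset.sum_sdiff_eq_sub (by simp), Finset.sum_singleton]; ring
  have hx0 := (hx ω₀).1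
  have hx1 := (hx ω₀).2
  have hp0 := hp ω₀
  have hs : 0 ≤ us ω₀ 0 - us ω₀ 1 := by linarith
  have hr : 0 ≤ ur ω₀ 0 - ur ω₀ 1 := by linarith
  refine ⟨?_, ?_, ?_, ?_, ?_⟩
  · rw [key (fun ω t => p ω * (us ω 0 - us ω 1) * t)]
    have : 0 ≤ p ω₀ * (us ω₀ 0 - us ω₀ 1) * (1 - x ω₀) := mul_nonneg (mul_nonneg hp0 (by linarith)) (by linarith)
    nlinarith
  · rw [key (fun ω t => p ω * (us ω 0 - us ω 1) * (1 - t))]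
    have : 0 ≤ p ω₀ * (us ω₀ 0 - us ω₀ 1) * (1 - x ω₀) := mul_nonneg (mul_nonneg hp0 (by linarith)) (by linarith)
    nlinarith
  · rw [key (fun ω t => p ω * (ur ω 0 - ur ω 1) * t)]
    have : 0 ≤ p ω₀ * (ur ω₀ 0 - ur ω₀ 1) * (1 - x ω₀) := mul_nonneg (mul_nonneg hp0 (by linarith)) (by linarith)
    nlinarith
  · rw [key (fun ω t => p ω * (ur ω 0 - ur ω 1) * (1 - t))]
    have : 0 ≤ p ω₀ * (ur ω₀ 0 - ur ω₀ 1) * (1 - x ω₀) := mul_nonneg (mul_nonneg hp0 (by linarith)) (by linarith)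
    nlinarith
  · rw [key (fun ω t => p ω * (t * ur ω 0 + (1 - t) * ur ω 1))]
    have : 0 ≤ p ω₀ * (ur ω₀ 0 - ur ω₀ 1) * (1 - x ω₀) := mul_nonneg (mul_nonneg hp0 (by linarith)) (by linarith)
    nlinarith
end

section
/- Let Ω be finite with prior p > 0 and utilities u_s, u_r : Ω × {0,1} → ℝ. Suppose ω_i, ω_j ∈ Ω are two states where the sender and receiver strictly disagree (i.e., for each of them, (u_s(ω,0)−u_s(ω,1)) and (u_r(ω,0)−u_r(ω,1)) have strictly opposite signs). Let d_s(ω) = u_s(ω,0)−u_s(ω,1) and d_r(ω) = u_r(ω,0)−u_r(ω,1). For a filter x : Ω → [0,1] and real ε, define x_ε by x_ε(ω_i) = x(ω_i) + ε·p(ω_j)·d_s(ω_j), x_ε(ω_j) = x(ω_j) − ε·p(ω_i)·d_s(ω_i), and x_ε = x elsewhere. Then for every ε: (1) the sender's expected utility ∑_ω p(ω)(x_ε(ω)u_s(ω,0)+(1−x_ε(ω))u_s(ω,1)) is independent of ε, and both sender-IC sums ∑_ω p(ω)d_s(ω)x_ε(ω) and ∑_ω p(ω)d_s(ω)(1−x_ε(ω))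 are independent of ε; (2) the receiver's expected utility changes by exactly ε·p(ω_i)p(ω_j)·(d_s(ω_j)d_r(ω_i) − d_s(ω_i)d_r(ω_j)). -/
open Finset
open Finset

lemma sum_update_two {Ω : Type*} [Fintype Ω] [DecidableEq Ω]
    (x : Ω → ℝ) (ωi ωj : Ω) (hne : ωi ≠ ωj) (a b : ℝ) (F : Ω → ℝ → ℝ) :
    ∑ ω, F ω (Function.update (Function.update x ωi a) ωj b ω)
      = (∑ ω, F ω (x ω)) - F ωi (x ωi) - F ωj (x ωj) + F ωi a + F ωj b := by
  classical
  have h1 : ∀ (y : Ω → ℝ) (c : ℝ) (ω0 : Ω),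
      ∑ ω, F ω (Function.update y ω0 c ω)
        = (∑ ω ∈ univ.erase ω0, F ω (y ω)) + F ω0 c := by
    intro y c ω0
    rw [← Finset.add_sum_erase _ _ (mem_univ ω0), Function.update_self, add_comm]
    congr 1
    exact Finset.sum_congr rfl fun ω hω =>
      by rw [Function.update_of_ne (Finset.ne_of_mem_erase hω)]
  rw [h1]
  have h2 : ∑ ω ∈ univ.erase ωj, F ω (Function.update x ωi a ω)
      = (∑ ω ∈ (univ.erase ωj).erase ωi, F ω (x ω)) + F ωi a := by
    rw [← Finset.add_sum_erase _ _ (by simp [hne] : ωi ∈ univ.erase ωj),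
      Function.update_self, add_comm]
    congr 1
    exact Finset.sum_congr rfl fun ω hω =>
      by rw [Function.update_of_ne (Finset.ne_of_mem_erase hω)]
  rw [h2]
  have e1 : ∑ ω, F ω (x ω) = F ωj (x ωj) + ∑ ω ∈ univ.erase ωj, F ω (x ω) :=
    (Finset.add_sum_erase _ (fun ω => F ω (x ω)) (mem_univ ωj)).symm
  have e2 : ∑ ω ∈ univ.erase ωj, F ω (x ω)
      = F ωi (x ωi) + ∑ ω ∈ (univ.erase ωj).erase ωi, F ω (x ω) :=
    (Finset.add_sum_erase _ (fun ω => F ω (x ω)) (by simp [hne] : ωi ∈ univ.erase ωj)).symm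
  linarith


/-- The exchange perturbation between two disagreement states keeps the sender's
expected utility and sender-IC sums unchanged and changes the receiver's
expected utility by exactly ε·p(ωi)p(ωj)(d_s(ωj)d_r(ωi) − d_s(ωi)d_r(ωj)). -/
theorem stmt_3 {Ω : Type*} [Fintype Ω] [DecidableEq Ω]
    (p : Ω → ℝ) (hp : ∀ ω, 0 < p ω) (hsum : ∑ ω, p ω = 1)
    (us ur : Ω → Fin 2 → ℝ)
    (ds dr : Ω → ℝ)
    (hds : ∀ ω, ds ω = us ω 0 - us ω 1) (hdr : ∀ ω, dr ω = ur ω 0 - ur ω 1)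
    (ωi ωj : Ω) (hne : ωi ≠ ωj)
    (hdisi : ds ωi * dr ωi < 0) (hdisj : ds ωj * dr ωj < 0)
    (x : Ω → ℝ) (ε : ℝ) :
    letI xε := Function.update (Function.update x ωi (x ωi + ε * p ωj * ds ωj)) ωj
      (x ωj - ε * p ωi * ds ωi)
    (∑ ω, p ω * (xε ω * us ω 0 + (1 - xε ω) * us ω 1) =
       ∑ ω, p ω * (x ω * us ω 0 + (1 - x ω) * us ω 1)) ∧
    (∑ ω, p ω * ds ω * xε ω = ∑ ω, p ω * ds ω * x ω) ∧
    (∑ ω, p ω * ds ω * (1 - xε ω) = ∑ ω, p ω * ds ω * (1 - x ω)) ∧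
    (∑ ω, p ω * (xε ω * ur ω 0 + (1 - xε ω) * ur ω 1) =
       ∑ ω, p ω * (x ω * ur ω 0 + (1 - x ω) * ur ω 1)
         + ε * p ωi * p ωj * (ds ωj * dr ωi - ds ωi * dr ωj)) := by
  refine ⟨?_, ?_, ?_, ?_⟩
  · rw [sum_update_two x ωi ωj hne _ _ (fun ω t => p ω * (t * us ω 0 + (1 - t) * us ω 1))]
    simp only [hds]; ring
  · rw [sum_update_two x ωi ωj hne _ _ (fun ω t => p ω * ds ω * t)]
    simp only [hds]; ring
  · rw [sum_update_two x ωi ωj hne _ _ (fun ω t => p ω * ds ω * (1 - t))]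
    simp only [hds]; ring
  · rw [sum_update_two x ωi ωj hne _ _ (fun ω t => p ω * (t * ur ω 0 + (1 - t) * ur ω 1))]
    simp only [hds, hdr]; ring
end

section
/- Let Ω be finite with prior p > 0 and utilities u_s, u_r, binary actions. Let X be any filter (a map from Ω to distributions over an arbitrary finite signal set) such that the truthful profile σ^s (sender reports her preferred action given her posterior at each signal; receiver obeys) is receiver incentive-compatible in Γ(X). Then the binary filter X' obtained by merging all signals where the sender weakly prefers 0 into signal '0' and all remaining signals into signal '1' satisfies: (a) σ^s is receiver incentive-compatible in Γ(X'), and (b) the receiver's expected utility under σ^s is the same in Γ(X) and Γ(X'). -/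
open Finset
open scoped Classical

/-- Merging the signals of an arbitrary filter by the sender's (posterior) weak
preference for action 0 yields a binary filter for which the truthful profile is
still receiver incentive-compatible and yields the same expected utility for the
receiver. -/
theorem stmt_14 {Ω S : Type*} [Fintype Ω] [Fintype S]
    (p : Ω → ℝ) (hp : ∀ ω, 0 < p ω) (hsum : ∑ ω, p ω = 1)
    (us ur : Ω → Fin 2 → ℝ)
    (X : Ω → S → ℝ) (hX0 : ∀ ω s, 0 ≤ X ω s) (hX1 : ∀ ω, ∑ s, X ω s = 1) :
    letI pref0 : S → Prop := fun s => 0 ≤ ∑ ω, p ω * X ω s * (us ω 0 - us ω 1)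
    letI x' : Ω → ℝ := fun ω => ∑ s ∈ univ.filter pref0, X ω s
    -- receiver-IC of the truthful profile in Γ(X):
    (0 ≤ ∑ s ∈ univ.filter pref0, ∑ ω, p ω * X ω s * (ur ω 0 - ur ω 1)) →
    (∑ s ∈ univ.filter (fun s => ¬ pref0 s), ∑ ω, p ω * X ω s * (ur ω 0 - ur ω 1) ≤ 0) →
    -- (a) receiver-IC of the truthful profile in Γ(X'):
    (0 ≤ ∑ ω, p ω * (ur ω 0 - ur ω 1) * x' ω) ∧
    (∑ ω, p ω * (ur ω 0 - ur ω 1) * (1 - x' ω) ≤ 0) ∧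
    -- (b) the receiver's expected utilities coincide:
    (∑ ω, p ω * (x' ω * ur ω 0 + (1 - x' ω) * ur ω 1) =
      ∑ s, ∑ ω, p ω * X ω s * (if pref0 s then ur ω 0 else ur ω 1)) := by
  intro h0 h1
  beta_reduce
  set pref0 : S → Prop := fun s => 0 ≤ ∑ ω, p ω * X ω s * (us ω 0 - us ω 1) with hpref0
  set x' : Ω → ℝ := fun ω => ∑ s ∈ univ.filter pref0, X ω s with hx'
  have hx'c : ∀ ω, 1 - x' ω = ∑ s ∈ univ.filter (fun s => ¬ pref0 s), X ω s := by
    intro ω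
    have := sum_filter_add_sum_filter_not (univ : Finset S) pref0 (X ω)
    have h := hX1 ω
    simp only [x']
    linarith
  have key : ∀ f : Ω → ℝ, ∀ T : Finset S,
      ∑ ω, p ω * f ω * (∑ s ∈ T, X ω s) = ∑ s ∈ T, ∑ ω, p ω * X ω s * f ω := by
    intro f T
    rw [Finset.sum_comm]
    exact Finset.sum_congr rfl fun ω _ => by
      rw [Finset.mul_sum]; exact Finset.sum_congr rfl fun s _ => by ring
  refine ⟨?_, ?_, ?_⟩
  · calc (0:ℝ) ≤ ∑ s ∈ univ.filter pref0, ∑ ω, p ω * X ω s * (ur ω 0 - ur ω 1) := h0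
      _ = ∑ ω, p ω * (ur ω 0 - ur ω 1) * x' ω := (key _ _).symm
  · calc ∑ ω, p ω * (ur ω 0 - ur ω 1) * (1 - x' ω)
        = ∑ ω, p ω * (ur ω 0 - ur ω 1) * (∑ s ∈ univ.filter (fun s => ¬ pref0 s), X ω s) := by
          exact Finset.sum_congr rfl fun ω _ => by rw [hx'c ω]
      _ = ∑ s ∈ univ.filter (fun s => ¬ pref0 s), ∑ ω, p ω * X ω s * (ur ω 0 - ur ω 1) :=
          key _ _
      _ ≤ 0 := h1
  · have split : ∑ s, ∑ ω, p ω * X ω s * (if pref0 s then ur ω 0 else ur ω 1)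
        = (∑ s ∈ univ.filter pref0, ∑ ω, p ω * X ω s * ur ω 0)
          + ∑ s ∈ univ.filter (fun s => ¬ pref0 s), ∑ ω, p ω * X ω s * ur ω 1 := by
      rw [← sum_filter_add_sum_filter_not (univ : Finset S) pref0]
      congr 1
      · exact Finset.sum_congr rfl fun s hs => by
          simp [(mem_filter.mp hs).2]
      · exact Finset.sum_congr rfl fun s hs => by
          simp [(mem_filter.mp hs).2]
    rw [split, ← key (fun ω => ur ω 0) _, ← key (fun ω => ur ω 1) _, ← Finset.sum_add_distrib]
    refine Finset.sum_congr rfl fun ω _ => ?_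
    rw [hx'c ω]
    ring
end

section
/- Consider the three-state example: Ω = {OG, IF, DF} with uniform prior p = (1/3,1/3,1/3), actions {buy, not-buy}, utilities: not-buy gives both players 0 in every state; buy gives (seller, buyer) utilities (1,1) on OG, (1,−5) on IF, (−5,−5) on DF. (1) If the seller observes the state exactly (full information filter), then in every Nash equilibrium of the cheap talk game the receiver never buys with positive probability on any message sent with positive probability, so both players get expected utility 0. (2) If instead the seller observes only the binary signal 'original' (on OG) vs 'fake' (on IF and DF), then the profile where the seller reports this bit and the buyer buys iff 'original' is a Nash equilibrium giving each player expected utility 1/3. -/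
open Finset

/-- The art-dealer example with states OG, IF, DF (as `Fin 3`), uniform prior 1/3,
seller buy-utilities (1,1,−5) and buyer buy-utilities (1,−5,−5), not buying giving
both players 0. (1) With a fully informed seller, in every Nash equilibrium
(sender-IC `hsIC` plus receiver best-response `hrIC`, where `σr m` is the
probability of buying on message `m`) the buyer never buys on any message sent
with positive probability, and both expected utilities are 0. (2) With the seller
seeing only whether the item is original, truthfully reporting that bit while the
buyer buys iff "original" is a Nash equilibrium giving each player expected
utility 1/3. -/
theorem stmt_15 :
    letI uS : Fin 3 → ℝ := ![1, 1, -5]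
    letI uB : Fin 3 → ℝ := ![1, -5, -5]
    -- (1) full information: every Nash equilibrium is babbling with utility 0
    (∀ (M : Type) [Fintype M] (σs : Fin 3 → M → ℝ) (σr : M → ℝ),
      (∀ ω m, 0 ≤ σs ω m) → (∀ ω, ∑ m, σs ω m = 1) →
      (∀ m, σr m ∈ Set.Icc (0 : ℝ) 1) →
      (∀ (ω : Fin 3) (m : M), 0 < σs ω m → ∀ m' : M,
          σr m' * uS ω ≤ σr m * uS ω) →
      (∀ m : M, 0 < ∑ ω, (1/3 : ℝ) * σs ω m →
        (0 < σr m → 0 ≤ ∑ ω, (1/3 : ℝ) * σs ω m * uB ω) ∧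
        (σr m < 1 → ∑ ω, (1/3 : ℝ) * σs ω m * uB ω ≤ 0)) →
      ((∀ m : M, 0 < ∑ ω, (1/3 : ℝ) * σs ω m → σr m = 0) ∧
       (∑ ω, (1/3 : ℝ) * ∑ m, σs ω m * (σr m * uS ω) = 0) ∧
       (∑ ω, (1/3 : ℝ) * ∑ m, σs ω m * (σr m * uB ω) = 0))) ∧
    -- (2) seller only learns whether ω = OG: truthful reporting and buying iff
    -- "original" is a Nash equilibrium with utility 1/3 for each player
    ((∀ τ : Bool → Bool,
        ∑ ω, (1/3 : ℝ) * (if τ (decide (ω = 0)) then uS ω else 0) ≤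
          ∑ ω, (1/3 : ℝ) * (if decide (ω = 0) then uS ω else 0)) ∧
     (∀ ρ : Bool → Bool,
        ∑ ω, (1/3 : ℝ) * (if ρ (decide (ω = 0)) then uB ω else 0) ≤
          ∑ ω, (1/3 : ℝ) * (if decide (ω = 0) then uB ω else 0)) ∧
     (∑ ω, (1/3 : ℝ) * (if decide (ω = 0) then uS ω else 0) = 1/3) ∧
     (∑ ω, (1/3 : ℝ) * (if decide (ω = 0) then uB ω else 0) = 1/3)) := by
  classical
  constructor
  · intro M _ σs σr hpos hsum hicc hsIC hrIC
    have hM : (Finset.univ : Finset M).Nonempty := by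
      by_contra h
      rw [Finset.not_nonempty_iff_eq_empty] at h
      have h1 := hsum 0
      rw [h] at h1
      simp at h1
    obtain ⟨mt, -, hmax⟩ := Finset.exists_max_image Finset.univ σr hM
    have key : σr mt ≤ 0 := by
      by_contra hc
      push_neg at hc
      have h0 : ∀ m, 0 < σs 0 m → σr m = σr mt := by
        intro m hm
        have h := hsIC 0 m hm mt
        simp [Matrix.cons_val_zero] at h
        exact le_antisymm (hmax m (Finset.mem_univ m)) h
      have h1 : ∀ m, 0 < σs 1 m → σr m = σr mt := by
        intro m hm
        have h := hsIC 1 m hm mt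
        simp [Matrix.cons_val_one, Matrix.head_cons] at h
        exact le_antisymm (hmax m (Finset.mem_univ m)) h
      set T : Finset M := Finset.univ.filter (fun m => σr m = σr mt) with hT
      have hineq : ∀ m ∈ T, 5 * σs 1 m ≤ σs 0 m := by
        intro m hm
        have ha : σr m = σr mt := (Finset.mem_filter.1 hm).2
        by_cases hp : 0 < ∑ ω, (1/3 : ℝ) * σs ω m
        · have hb := (hrIC m hp).1 (ha ▸ hc)
          rw [Fin.sum_univ_three] at hb
          simp [Matrix.cons_val_zero, Matrix.cons_val_one, Matrix.head_cons] at hb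
          have h2 := hpos 2 m
          nlinarith [hb, h2]
        · push_neg at hp
          have heach : ∀ ω : Fin 3, σs ω m = 0 := by
            intro ω
            have hsn : ∑ ω : Fin 3, (1/3 : ℝ) * σs ω m = 0 := by
              have : (0:ℝ) ≤ ∑ ω : Fin 3, (1/3 : ℝ) * σs ω m :=
                Finset.sum_nonneg fun ω _ => mul_nonneg (by norm_num) (hpos ω m)
              linarith
            have := (Finset.sum_eq_zero_iff_of_nonneg
              (fun ω _ => mul_nonneg (by norm_num) (hpos ω m))).1 hsn ω (Finset.mem_univ ω)
            linarith [hpos ω m]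
          rw [heach 0, heach 1]; norm_num
      have t1 : ∑ m ∈ T, σs 1 m = 1 := by
        rw [← hsum 1]
        apply Finset.sum_subset (Finset.filter_subset _ _)
        intro m _ hm
        by_contra hne
        have : 0 < σs 1 m := lt_of_le_of_ne (hpos 1 m) (Ne.symm hne)
        exact hm (Finset.mem_filter.2 ⟨Finset.mem_univ m, h1 m this⟩)
      have t0 : ∑ m ∈ T, σs 0 m ≤ 1 := by
        rw [← hsum 0]
        exact Finset.sum_le_sum_of_subset_of_nonneg (Finset.filter_subset _ _)
          (fun m _ _ => hpos 0 m)
      have hsumle : ∑ m ∈ T, 5 * σs 1 m ≤ ∑ m ∈ T, σs 0 m :=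
        Finset.sum_le_sum hineq
      rw [← Finset.mul_sum, t1] at hsumle
      linarith
    have hzero : ∀ m, σr m = 0 := fun m =>
      le_antisymm (le_trans (hmax m (Finset.mem_univ m)) key) (hicc m).1
    refine ⟨fun m _ => hzero m, ?_, ?_⟩ <;>
      simp [hzero, mul_zero, zero_mul, Finset.sum_const_zero]
  · refine ⟨?_, ?_, ?_, ?_⟩
    · intro τ
      rcases hτt : τ true <;> rcases hτf : τ false <;>
        simp [Fin.sum_univ_three, hτt, hτf, Matrix.cons_val_zero,
          Matrix.cons_val_one, Matrix.head_cons] <;> norm_num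
    · intro ρ
      rcases hρt : ρ true <;> rcases hρf : ρ false <;>
        simp [Fin.sum_univ_three, hρt, hρf, Matrix.cons_val_zero,
          Matrix.cons_val_one, Matrix.head_cons] <;> norm_num
    · norm_num [Fin.sum_univ_three, Matrix.cons_val_zero, Matrix.cons_val_one,
        Matrix.head_cons]
    · norm_num [Fin.sum_univ_three, Matrix.cons_val_zero, Matrix.cons_val_one,
        Matrix.head_cons]
end

section
/- Let Ω be finite, p > 0, d_s, d_r : Ω → ℝ with d_t(ω) = u_t(ω,0)−u_t(ω,1). Suppose x : Ω → [0,1] satisfies sender-IC (∑ p d_s x ≥ 0, ∑ p d_s (1−x) ≤ 0) and receiver-IC, is receiver-optimal among all such filters, and there exist two distinct states ω_i, ω_j with x(ω_i), x(ω_j) ∈ (0,1) on which sender and receiver strictly disagree (d_s(ω) and d_r(ω) strictly opposite signs for ω ∈ {ω_i,ω_j}), and such that d_s(ω_j)d_r(ω_i) − d_s(ω_i)d_r(ω_j) ≠ 0. Then x is not receiver-optimal — contradiction; hence every receiver-optimal filter either has at most one disagreement state with interior probability, or all pairs of interior disagreement states satisfy d_s(ω_j)d_r(ω_i) = d_s(ω_i)d_r(ω_j).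 -/
open Finset

/-- At a receiver-optimal incentive-compatible binary filter, any two distinct
disagreement states with interior filter probabilities must satisfy
d_s(ωj)·d_r(ωi) = d_s(ωi)·d_r(ωj). -/
theorem stmt_16 {Ω : Type*} [Fintype Ω] [DecidableEq Ω]
    (p : Ω → ℝ) (hp : ∀ ω, 0 < p ω) (hsum : ∑ ω, p ω = 1)
    (us ur : Ω → Fin 2 → ℝ)
    (ds dr : Ω → ℝ)
    (hds : ∀ ω, ds ω = us ω 0 - us ω 1) (hdr : ∀ ω, dr ω = ur ω 0 - ur ω 1)
    (x : Ω → ℝ) (hx : ∀ ω, x ω ∈ Set.Icc (0 : ℝ) 1)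
    (hsIC0 : 0 ≤ ∑ ω, p ω * ds ω * x ω)
    (hsIC1 : ∑ ω, p ω * ds ω * (1 - x ω) ≤ 0)
    (hrIC0 : 0 ≤ ∑ ω, p ω * dr ω * x ω)
    (hrIC1 : ∑ ω, p ω * dr ω * (1 - x ω) ≤ 0)
    (hopt : ∀ y : Ω → ℝ, (∀ ω, y ω ∈ Set.Icc (0 : ℝ) 1) →
      (0 ≤ ∑ ω, p ω * ds ω * y ω) → (∑ ω, p ω * ds ω * (1 - y ω) ≤ 0) →
      (0 ≤ ∑ ω, p ω * dr ω * y ω) → (∑ ω, p ω * dr ω * (1 - y ω) ≤ 0) →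
      ∑ ω, p ω * (y ω * ur ω 0 + (1 - y ω) * ur ω 1) ≤
        ∑ ω, p ω * (x ω * ur ω 0 + (1 - x ω) * ur ω 1))
    (ωi ωj : Ω) (hne : ωi ≠ ωj)
    (hi : x ωi ∈ Set.Ioo (0 : ℝ) 1) (hj : x ωj ∈ Set.Ioo (0 : ℝ) 1)
    (hdisi : ds ωi * dr ωi < 0) (hdisj : ds ωj * dr ωj < 0) :
    ds ωj * dr ωi = ds ωi * dr ωj := by
  by_contra hD
  set D : ℝ := ds ωj * dr ωi - ds ωi * dr ωj with hDdef
  have hD0 : D ≠ 0 := sub_ne_zero.mpr hD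
  -- margins
  set m : ℝ := min (min (x ωi) (1 - x ωi)) (min (x ωj) (1 - x ωj)) with hm
  have hm0 : 0 < m := by
    obtain ⟨hi1, hi2⟩ := hi
    obtain ⟨hj1, hj2⟩ := hj
    simp only [hm, lt_min_iff]
    exact ⟨⟨hi1, by linarith⟩, hj1, by linarith⟩
  set A : ℝ := |D * ds ωj| / p ωi with hA
  set B : ℝ := |D * ds ωi| / p ωj with hB
  have hA0 : 0 ≤ A := div_nonneg (abs_nonneg _) (hp ωi).le
  have hB0 : 0 ≤ B := div_nonneg (abs_nonneg _) (hp ωj).le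
  set δ : ℝ := m / (A + B + 1) with hδ
  have hδ0 : 0 < δ := div_pos hm0 (by linarith)
  have hδA : δ * A ≤ m := by
    rw [hδ, div_mul_eq_mul_div, div_le_iff₀ (by linarith)]
    nlinarith
  have hδB : δ * B ≤ m := by
    rw [hδ, div_mul_eq_mul_div, div_le_iff₀ (by linarith)]
    nlinarith
  set ε : ℝ := δ * D with hε
  have hεD : 0 < ε * D := by
    have h2 := mul_self_pos.mpr hD0
    rw [hε]; nlinarith
  -- the perturbed filter
  set y : Ω → ℝ := fun ω =>
    if ω = ωi then x ωi + ε * ds ωj / p ωi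
    else if ω = ωj then x ωj - ε * ds ωi / p ωj
    else x ω with hy
  have hyi : y ωi = x ωi + ε * ds ωj / p ωi := by simp [hy]
  have hyj : y ωj = x ωj - ε * ds ωi / p ωj := by simp [hy, hne.symm]
  have hyo : ∀ ω, ω ≠ ωi → ω ≠ ωj → y ω = x ω := by
    intro ω h1 h2; simp [hy, h1, h2]
  -- bounds on the perturbation terms
  have habsi : |ε * ds ωj / p ωi| ≤ m := by
    have : |ε * ds ωj / p ωi| = δ * A := by
      rw [hA, hε, abs_div, abs_of_pos (hp ωi), abs_mul, abs_mul,
        abs_of_pos hδ0]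
      rw [abs_mul]; ring
    rw [this]; exact hδA
  have habsj : |ε * ds ωi / p ωj| ≤ m := by
    have : |ε * ds ωi / p ωj| = δ * B := by
      rw [hB, hε, abs_div, abs_of_pos (hp ωj), abs_mul, abs_mul,
        abs_of_pos hδ0]
      rw [abs_mul]; ring
    rw [this]; exact hδB
  have hmi1 : m ≤ x ωi := le_trans (min_le_left _ _) (min_le_left _ _)
  have hmi2 : m ≤ 1 - x ωi := le_trans (min_le_left _ _) (min_le_right _ _)
  have hmj1 : m ≤ x ωj := le_trans (min_le_right _ _) (min_le_left _ _)
  have hmj2 : m ≤ 1 - x ωj := le_trans (min_le_right _ _) (min_le_right _ _)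
  have hybound : ∀ ω, y ω ∈ Set.Icc (0 : ℝ) 1 := by
    intro ω
    rcases eq_or_ne ω ωi with rfl | h1
    · rw [hyi]
      have h1 := abs_le.mp habsi
      constructor <;> [linarith [h1.1]; linarith [h1.2]]
    rcases eq_or_ne ω ωj with rfl | h2
    · rw [hyj]
      have h1 := abs_le.mp habsj
      constructor <;> [linarith [h1.2]; linarith [h1.1]]
    · rw [hyo ω h1 h2]; exact hx ω
  -- key sum computation
  have key : ∀ f : Ω → ℝ, ∑ ω, p ω * f ω * y ω =
      (∑ ω, p ω * f ω * x ω) + ε * (ds ωj * f ωi - ds ωi * f ωj) := by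
    intro f
    have hdiff : ∑ ω, (p ω * f ω * y ω - p ω * f ω * x ω)
        = ε * (ds ωj * f ωi - ds ωi * f ωj) := by
      have hsub : ({ωi, ωj} : Finset Ω) ⊆ Finset.univ := Finset.subset_univ _
      rw [← Finset.sum_subset hsub (fun ω _ hω => by
        simp only [Finset.mem_insert, Finset.mem_singleton, not_or] at hω
        rw [hyo ω hω.1 hω.2]; ring)]
      rw [Finset.sum_pair hne, hyi, hyj]
      have hpi : p ωi ≠ 0 := (hp ωi).ne'
      have hpj : p ωj ≠ 0 := (hp ωj).ne'
      field_simp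
      ring
    have := Finset.sum_sub_distrib (f := fun ω => p ω * f ω * y ω)
      (g := fun ω => p ω * f ω * x ω) (s := Finset.univ)
    rw [this] at hdiff
    linarith
  have keyds := key ds
  have keydr := key dr
  have hcancel : ds ωj * ds ωi - ds ωi * ds ωj = 0 := by ring
  have hs0' : 0 ≤ ∑ ω, p ω * ds ω * y ω := by
    rw [keyds, hcancel, mul_zero, add_zero]; exact hsIC0
  have hsplit : ∀ z : Ω → ℝ, ∀ f : Ω → ℝ,
      ∑ ω, p ω * f ω * (1 - z ω) = (∑ ω, p ω * f ω) - ∑ ω, p ω * f ω * z ω := by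
    intro z f
    rw [← Finset.sum_sub_distrib]
    exact Finset.sum_congr rfl (fun ω _ => by ring)
  have hs1' : ∑ ω, p ω * ds ω * (1 - y ω) ≤ 0 := by
    rw [hsplit y ds, keyds, hcancel, mul_zero, add_zero, ← hsplit x ds]
    exact hsIC1
  have hDval : ds ωj * dr ωi - ds ωi * dr ωj = D := hDdef.symm
  have hr0' : 0 ≤ ∑ ω, p ω * dr ω * y ω := by
    rw [keydr, hDval]; linarith
  have hr1' : ∑ ω, p ω * dr ω * (1 - y ω) ≤ 0 := by
    rw [hsplit y dr, keydr, hDval]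
    have h := hrIC1
    rw [hsplit x dr] at h
    linarith
  -- objective comparison
  have hobj : ∀ z : Ω → ℝ, ∑ ω, p ω * (z ω * ur ω 0 + (1 - z ω) * ur ω 1)
      = (∑ ω, p ω * dr ω * z ω) + ∑ ω, p ω * ur ω 1 := by
    intro z
    rw [← Finset.sum_add_distrib]
    refine Finset.sum_congr rfl (fun ω _ => ?_)
    rw [hdr ω]; ring
  have hle := hopt y hybound hs0' hs1' hr0' hr1'
  rw [hobj y, hobj x, keydr, hDval] at hle
  linarith
end
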